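/- arXiv:2604.10976 — 3 statements merged into one kernel-verified Lean document; each statement's English description precedes it below -/
import Mathlib

section
/- Let n ≥ 1, r ∈ ℝ, f_1,…,f_n ∈ ℝ and y_1,…,y_n ∈ ℝ, and define q(ξ) = (∏_{i=1}^n (2π)^{-1/2} exp(−(y_i − f_i − rξ)²/2))·φ(ξ). With I = ∫_ℝ q(ξ) dξ, I_M = ∫_{−M}^{M} q(ξ) dξ, and Δ_M = log I − log I_M, one has lim_{M→∞} (1/M²)·log Δ_M = −(1 + n r²)/2. -/
open MeasureTheory Filter

section AuxNGMM

open Real Set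

lemma aux_lim (a c d : ℝ) :
    Tendsto (fun M : ℝ => (1/M^2) * (c - a/2*(M+d)^2)) atTop (nhds (-(a/2))) := by
  have hcont : Continuous (fun x : ℝ => c*x^2 - a/2*(1+d*x)^2) := by continuity
  have h := (hcont.tendsto 0).comp tendsto_inv_atTop_zero
  have h0 : c*(0:ℝ)^2 - a/2*(1+d*0)^2 = -(a/2) := by ring
  rw [h0] at h
  refine h.congr' ?_
  filter_upwards [eventually_gt_atTop (0:ℝ)] with M hM
  have : M ≠ 0 := ne_of_gt hM
  simp only [Function.comp_apply]
  field_simp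
  try ring

lemma aux_zero (c : ℝ) :
    Tendsto (fun M : ℝ => (1/M^2) * c) atTop (nhds 0) := by
  have hcont : Continuous (fun x : ℝ => x^2 * c) := by continuity
  have h := (hcont.tendsto 0).comp tendsto_inv_atTop_zero
  have h0 : (0:ℝ)^2 * c = 0 := by ring
  rw [h0] at h
  refine h.congr fun M => ?_
  simp [Function.comp, one_div, inv_pow]

set_option maxHeartbeats 1000000 in
lemma gauss_main (a K μ : ℝ) (ha : 1 ≤ a) (hK : 0 < K)
    (q : ℝ → ℝ) (hq : ∀ ξ, q ξ = K * Real.exp (-(a/2) * (ξ - μ)^2))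
    (I : ℝ) (hI : I = ∫ ξ : ℝ, q ξ)
    (IM : ℝ → ℝ) (hIM : ∀ M, IM M = ∫ ξ in (-M)..M, q ξ)
    (Δ : ℝ → ℝ) (hΔ : ∀ M, Δ M = Real.log I - Real.log (IM M)) :
    Tendsto (fun M => (1/M^2) * Real.log (Δ M)) atTop (nhds (-(a/2))) := by
  have ha0 : (0:ℝ) < a/2 := by linarith
  have hqeq : q = fun ξ => K * Real.exp (-(a/2) * (ξ - μ)^2) := funext hq
  have hint : Integrable q := by
    rw [hqeq]
    exact ((integrable_exp_neg_mul_sq ha0).comp_sub_right μ).const_mul K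
  have hqpos : ∀ ξ, 0 < q ξ := fun ξ => by rw [hq]; positivity
  -- value of I
  have hIval : I = K * Real.sqrt (π / (a/2)) := by
    rw [hI, hqeq, integral_const_mul,
      integral_sub_right_eq_self (fun x => Real.exp (-(a/2) * x^2)) μ,
      integral_gaussian]
  have hIpos : 0 < I := by
    rw [hIval]
    have : (0:ℝ) < π / (a/2) := by positivity
    positivity
  -- tail
  set T : ℝ → ℝ := fun M => (∫ ξ in Iic (-M), q ξ) + ∫ ξ in Ioi M, q ξ with hT
  clear_value T
  have hsplit : ∀ M : ℝ, I - IM M = T M := by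
    intro M
    have h1 : (∫ ξ in Iic M, q ξ) + (∫ ξ in Ioi M, q ξ) = I := by
      rw [hI]; exact intervalIntegral.integral_Iic_add_Ioi hint.integrableOn hint.integrableOn
    have h2 : (∫ ξ in Iic M, q ξ) - (∫ ξ in Iic (-M), q ξ) = IM M := by
      rw [hIM]; exact intervalIntegral.integral_Iic_sub_Iic hint.integrableOn hint.integrableOn
    simp only [hT]; linarith
  -- upper bound on tails
  have hub : ∀ M : ℝ, |μ| + 1 ≤ M → T M ≤ 2*K*Real.exp (-(a/2)*(M + -|μ|)^2) := by
    intro M hM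
    have hμ1 : μ + 1 ≤ M := by have := le_abs_self μ; linarith
    have hμ2 : -μ + 1 ≤ M := by have := neg_abs_le μ; linarith
    have hub1 : (∫ ξ in Ioi M, q ξ) ≤ K * Real.exp (-(a/2)*(M-μ)^2) := by
      have hintb : IntegrableOn (fun ξ : ℝ => (K * Real.exp (-(a/2)*(M-μ)^2 + M)) * Real.exp (-ξ)) (Ioi M) := by
        have : IntegrableOn (fun x : ℝ => Real.exp (-x)) (Ioi M) := by
          simpa using exp_neg_integrableOn_Ioi M one_pos
        exact this.const_mul _
      have hle : (∫ ξ in Ioi M, q ξ) ≤ ∫ ξ in Ioi M, (K * Real.exp (-(a/2)*(M-μ)^2 + M)) * Real.exp (-ξ) := by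
        refine setIntegral_mono_on hint.integrableOn hintb measurableSet_Ioi ?_
        intro ξ hξ
        rw [hq, mul_assoc, ← Real.exp_add]
        have hξM : M < ξ := hξ
        have key : -(a/2) * (ξ - μ)^2 ≤ (-(a/2)*(M-μ)^2 + M) + -ξ := by
          nlinarith [mul_nonneg (sub_nonneg.2 hξM.le) (by linarith : (0:ℝ) ≤ ξ + M - 2*μ - 2),
            mul_nonneg (mul_nonneg (by linarith : (0:ℝ) ≤ a - 1) (sub_nonneg.2 hξM.le))
              (by linarith : (0:ℝ) ≤ ξ + M - 2*μ)]
        exact mul_le_mul_of_nonneg_left (Real.exp_le_exp.2 key) hK.le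
      calc (∫ ξ in Ioi M, q ξ) ≤ _ := hle
        _ = (K * Real.exp (-(a/2)*(M-μ)^2 + M)) * Real.exp (-M) := by
            rw [integral_const_mul, integral_exp_neg_Ioi]
        _ = K * Real.exp (-(a/2)*(M-μ)^2) := by
            rw [mul_assoc, ← Real.exp_add]; ring_nf
    have hub2 : (∫ ξ in Iic (-M), q ξ) ≤ K * Real.exp (-(a/2)*(M+μ)^2) := by
      have hintb : IntegrableOn (fun ξ : ℝ => (K * Real.exp (-(a/2)*(M+μ)^2 + M)) * Real.exp ξ) (Iic (-M)) := by
        exact (integrableOn_exp_Iic (-M)).const_mul _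
      have hle : (∫ ξ in Iic (-M), q ξ) ≤ ∫ ξ in Iic (-M), (K * Real.exp (-(a/2)*(M+μ)^2 + M)) * Real.exp ξ := by
        refine setIntegral_mono_on hint.integrableOn hintb measurableSet_Iic ?_
        intro ξ hξ
        rw [hq, mul_assoc, ← Real.exp_add]
        have hξM : ξ ≤ -M := hξ
        have key : -(a/2) * (ξ - μ)^2 ≤ (-(a/2)*(M+μ)^2 + M) + ξ := by
          nlinarith [mul_nonneg (by linarith : (0:ℝ) ≤ -M - ξ) (by linarith : (0:ℝ) ≤ -ξ + M + 2*μ - 2),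
            mul_nonneg (mul_nonneg (by linarith : (0:ℝ) ≤ a - 1) (by linarith : (0:ℝ) ≤ -M - ξ))
              (by linarith : (0:ℝ) ≤ -ξ + M + 2*μ)]
        exact mul_le_mul_of_nonneg_left (Real.exp_le_exp.2 key) hK.le
      calc (∫ ξ in Iic (-M), q ξ) ≤ _ := hle
        _ = (K * Real.exp (-(a/2)*(M+μ)^2 + M)) * Real.exp (-M) := by
            rw [integral_const_mul, integral_exp_Iic]
        _ = K * Real.exp (-(a/2)*(M+μ)^2) := by
            rw [mul_assoc, ← Real.exp_add]; ring_nf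
    have h1 : Real.exp (-(a/2)*(M-μ)^2) ≤ Real.exp (-(a/2)*(M + -|μ|)^2) := by
      apply Real.exp_le_exp.2
      have h1 : 0 ≤ M - |μ| := by linarith
      have h2 : M - |μ| ≤ M - μ := by have := le_abs_self μ; linarith
      have hsq : (M + -|μ|)^2 ≤ (M - μ)^2 := by nlinarith
      nlinarith [mul_le_mul_of_nonneg_left hsq ha0.le]
    have h2 : Real.exp (-(a/2)*(M+μ)^2) ≤ Real.exp (-(a/2)*(M + -|μ|)^2) := by
      apply Real.exp_le_exp.2
      have h1 : 0 ≤ M - |μ| := by linarith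
      have h2 : M - |μ| ≤ M + μ := by have := neg_abs_le μ; linarith
      have hsq : (M + -|μ|)^2 ≤ (M + μ)^2 := by nlinarith
      nlinarith [mul_le_mul_of_nonneg_left hsq ha0.le]
    have := mul_le_mul_of_nonneg_left h1 hK.le
    have := mul_le_mul_of_nonneg_left h2 hK.le
    simp only [hT]; linarith
  -- lower bound on tails
  have hlb : ∀ M : ℝ, |μ| + 1 ≤ M → K * Real.exp (-(a/2)*(M + (1+|μ|))^2) ≤ T M := by
    intro M hM
    have hMpos : (0:ℝ) < M := by have := abs_nonneg μ; linarith
    have h1 : K * Real.exp (-(a/2)*(M + (1+|μ|))^2) ≤ ∫ ξ in Ioc M (M+1), q ξ := by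
      have := setIntegral_ge_of_const_le (μ := volume) (s := Ioc M (M+1))
        (c := K * Real.exp (-(a/2)*(M + (1+|μ|))^2)) (f := q) measurableSet_Ioc
        (by simp) ?_ (hint.integrableOn)
      · simpa using this
      · intro ξ hξ
        rw [hq]
        apply mul_le_mul_of_nonneg_left _ hK.le
        apply Real.exp_le_exp.2
        have hξ1 : M < ξ := hξ.1
        have hξ2 : ξ ≤ M + 1 := hξ.2
        have hμ1 : -|μ| ≤ μ := neg_abs_le μ
        have hμ2 : μ ≤ |μ| := le_abs_self μ
        have hsq : (ξ - μ)^2 ≤ (M + (1 + |μ|))^2 := by nlinarith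
        nlinarith [mul_le_mul_of_nonneg_left hsq ha0.le]
    have h2 : (∫ ξ in Ioc M (M+1), q ξ) ≤ ∫ ξ in Ioi M, q ξ := by
      apply setIntegral_mono_set hint.integrableOn
        (Eventually.of_forall fun ξ => (hqpos ξ).le)
        (HasSubset.Subset.eventuallyLE Ioc_subset_Ioi_self)
    have h3 : 0 ≤ ∫ ξ in Iic (-M), q ξ :=
      setIntegral_nonneg measurableSet_Iic fun ξ _ => (hqpos ξ).le
    simp only [hT]; linarith
  -- limit of (1/M^2) * log (T M)
  have hTpos : ∀ M : ℝ, |μ| + 1 ≤ M → 0 < T M := fun M hM =>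
    lt_of_lt_of_le (by positivity) (hlb M hM)
  have hL : Tendsto (fun M : ℝ => (1/M^2) * Real.log (T M)) atTop (nhds (-(a/2))) := by
    apply tendsto_of_tendsto_of_tendsto_of_le_of_le' (aux_lim a (Real.log K) (1+|μ|))
      (aux_lim a (Real.log (2*K)) (-|μ|))
    · filter_upwards [eventually_ge_atTop (|μ|+1), eventually_gt_atTop (0:ℝ)] with M hM hM0
      apply mul_le_mul_of_nonneg_left _ (by positivity : (0:ℝ) ≤ 1/M^2)
      have := hlb M hM
      calc Real.log K - a/2*(M+(1+|μ|))^2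
          = Real.log (K * Real.exp (-(a/2)*(M + (1+|μ|))^2)) := by
            rw [Real.log_mul hK.ne' (Real.exp_ne_zero _), Real.log_exp]; ring
        _ ≤ Real.log (T M) := Real.log_le_log (by positivity) this
    · filter_upwards [eventually_ge_atTop (|μ|+1), eventually_gt_atTop (0:ℝ)] with M hM hM0
      apply mul_le_mul_of_nonneg_left _ (by positivity : (0:ℝ) ≤ 1/M^2)
      calc Real.log (T M) ≤ Real.log (2*K*Real.exp (-(a/2)*(M + -|μ|)^2)) :=
            Real.log_le_log (hTpos M hM) (hub M hM)
        _ = Real.log (2*K) - a/2*(M + -|μ|)^2 := by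
            rw [Real.log_mul (by positivity) (Real.exp_ne_zero _), Real.log_exp]; ring
  -- T M → 0, so eventually T M < I/2
  have hT0 : Tendsto T atTop (nhds 0) := by
    have hexp : Tendsto (fun M : ℝ => 2*K*Real.exp (-(a/2)*(M + -|μ|)^2)) atTop (nhds 0) := by
      rw [show (0:ℝ) = 2*K*0 by ring]
      apply Tendsto.const_mul
      apply Real.tendsto_exp_atBot.comp
      apply (tendsto_const_mul_atBot_of_neg (by linarith : -(a/2) < 0)).2
      exact (tendsto_pow_atTop two_ne_zero).comp (tendsto_atTop_add_const_right _ _ tendsto_id)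
    apply tendsto_of_tendsto_of_tendsto_of_le_of_le' tendsto_const_nhds hexp
    · filter_upwards [eventually_ge_atTop (|μ|+1)] with M hM
      exact (hTpos M hM).le
    · filter_upwards [eventually_ge_atTop (|μ|+1)] with M hM
      exact hub M hM
  have hev : ∀ᶠ M in atTop, T M < I/2 := hT0.eventually_lt_const (by positivity)
  -- relate log Δ to log T
  have lower : Tendsto (fun M : ℝ => (1/M^2) * Real.log (T M) + (1/M^2) * (-Real.log I))
      atTop (nhds (-(a/2))) := by
    have := hL.add (aux_zero (-Real.log I))
    simpa using this
  have upper : Tendsto (fun M : ℝ => (1/M^2) * Real.log (T M) + (1/M^2) * (Real.log 2 - Real.log I))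
      atTop (nhds (-(a/2))) := by
    have := hL.add (aux_zero (Real.log 2 - Real.log I))
    simpa using this
  apply tendsto_of_tendsto_of_tendsto_of_le_of_le' lower upper
  · filter_upwards [eventually_ge_atTop (|μ|+1), eventually_gt_atTop (0:ℝ), hev] with M hM hM0 hTI
    have hTp := hTpos M hM
    have hITpos : 0 < I - T M := by linarith
    have hIMval : IM M = I - T M := by linarith [hsplit M]
    have hxpos : 0 < T M / I := div_pos hTp hIpos
    have hΔval : Δ M = -Real.log (1 - T M / I) := by
      rw [hΔ, hIMval, show (1:ℝ) - T M / I = (I - T M)/I by field_simp,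
        Real.log_div hITpos.ne' hIpos.ne']
      ring
    have hxle : T M / I ≤ Δ M := by
      rw [hΔval]
      have := Real.log_le_sub_one_of_pos (div_pos hITpos hIpos)
      have h2 : (I - T M)/I = 1 - T M / I := by field_simp
      rw [h2] at this
      linarith
    have hlog : Real.log (T M / I) ≤ Real.log (Δ M) := Real.log_le_log hxpos hxle
    rw [Real.log_div hTp.ne' hIpos.ne'] at hlog
    have h := mul_le_mul_of_nonneg_left hlog (by positivity : (0:ℝ) ≤ 1/M^2)
    calc (1/M^2) * Real.log (T M) + (1/M^2) * (-Real.log I)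
        = (1/M^2) * (Real.log (T M) - Real.log I) := by ring
      _ ≤ (1/M^2) * Real.log (Δ M) := h
  · filter_upwards [eventually_ge_atTop (|μ|+1), eventually_gt_atTop (0:ℝ), hev] with M hM hM0 hTI
    have hTp := hTpos M hM
    have hITpos : 0 < I - T M := by linarith
    have hIMval : IM M = I - T M := by linarith [hsplit M]
    have hxpos : 0 < T M / I := div_pos hTp hIpos
    have hxhalf : T M / I < 1/2 := by rw [div_lt_iff₀ hIpos]; linarith
    have hΔval : Δ M = -Real.log (1 - T M / I) := by
      rw [hΔ, hIMval, show (1:ℝ) - T M / I = (I - T M)/I by field_simp,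
        Real.log_div hITpos.ne' hIpos.ne']
      ring
    have hxle : T M / I ≤ Δ M := by
      rw [hΔval]
      have := Real.log_le_sub_one_of_pos (div_pos hITpos hIpos)
      have h2 : (I - T M)/I = 1 - T M / I := by field_simp
      rw [h2] at this
      linarith
    have hΔle : Δ M ≤ 2*(T M / I) := by
      rw [hΔval]
      have hE := Real.add_one_le_exp (2*(T M / I))
      have hprod : Real.exp (-(2*(T M / I))) * Real.exp (2*(T M / I)) = 1 := by
        rw [← Real.exp_add]; simp
      have hexple : Real.exp (-(2*(T M / I))) ≤ 1 - T M / I := by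
        nlinarith [Real.exp_pos (2*(T M / I)), Real.exp_pos (-(2*(T M / I))),
          mul_nonneg hxpos.le (by linarith : (0:ℝ) ≤ 1 - 2*(T M / I))]
      have hlg : -(2*(T M / I)) ≤ Real.log (1 - T M / I) :=
        (Real.le_log_iff_exp_le (by linarith : (0:ℝ) < 1 - T M / I)).2 hexple
      linarith
    have hlog : Real.log (Δ M) ≤ Real.log (2*(T M / I)) :=
      Real.log_le_log (by linarith) hΔle
    have hlog2x : Real.log (2*(T M / I)) = Real.log 2 + (Real.log (T M) - Real.log I) := by
      rw [Real.log_mul two_ne_zero hxpos.ne', Real.log_div hTp.ne' hIpos.ne']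
    rw [hlog2x] at hlog
    have h := mul_le_mul_of_nonneg_left hlog (by positivity : (0:ℝ) ≤ 1/M^2)
    calc (1/M^2) * Real.log (Δ M)
        ≤ (1/M^2) * (Real.log 2 + (Real.log (T M) - Real.log I)) := h
      _ = (1/M^2) * Real.log (T M) + (1/M^2) * (Real.log 2 - Real.log I) := by ring

end AuxNGMM

/-- The standard normal density on `ℝ`. -/
noncomputable def phi (ξ : ℝ) : ℝ := (Real.sqrt (2 * Real.pi))⁻¹ * Real.exp (-ξ ^ 2 / 2)

/-- Exact Gaussian tail exponent of the truncation error in the Gaussian NGMM with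
unit observation variance: `(1/M²)·log Δ_M → −(1 + n r²)/2` as `M → ∞`. -/
theorem stmt_6 (n : ℕ) (hn : 1 ≤ n) (r : ℝ) (f y : Fin n → ℝ)
    (q : ℝ → ℝ)
    (hq : ∀ ξ, q ξ =
      (∏ i, (Real.sqrt (2 * Real.pi))⁻¹ * Real.exp (-(y i - f i - r * ξ) ^ 2 / 2)) * phi ξ)
    (I : ℝ) (hI : I = ∫ ξ : ℝ, q ξ)
    (IM : ℝ → ℝ) (hIM : ∀ M, IM M = ∫ ξ in (-M)..M, q ξ)
    (Δ : ℝ → ℝ) (hΔ : ∀ M, Δ M = Real.log I - Real.log (IM M)) :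
    Tendsto (fun M => (1 / M ^ 2) * Real.log (Δ M)) atTop
      (nhds (-((1 + n * r ^ 2) / 2))) := by
  set a : ℝ := 1 + n * r^2 with haa
  have ha : 1 ≤ a := by
    have : (0:ℝ) ≤ n * r^2 := by positivity
    simp [haa]; linarith
  have ha0 : a ≠ 0 := by linarith
  set c : ℝ := (Real.sqrt (2 * Real.pi))⁻¹ with hc
  have hcpos : 0 < c := by
    rw [hc]
    have : (0:ℝ) < Real.sqrt (2 * Real.pi) := Real.sqrt_pos.2 (by positivity)
    positivity
  set S1 : ℝ := ∑ i, (y i - f i) with hS1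
  set S2 : ℝ := ∑ i, (y i - f i)^2 with hS2
  set μ0 : ℝ := r * S1 / a with hμ0
  set K : ℝ := c^n * c * Real.exp (-(S2 - r^2*S1^2/a)/2) with hKdef
  have hKpos : 0 < K := by rw [hKdef]; positivity
  have hq' : ∀ ξ, q ξ = K * Real.exp (-(a/2) * (ξ - μ0)^2) := by
    intro ξ
    rw [hq, phi]
    have hprod : (∏ i, c * Real.exp (-(y i - f i - r * ξ) ^ 2 / 2))
        = c^n * Real.exp (∑ i, -(y i - f i - r * ξ) ^ 2 / 2) := by
      rw [Finset.prod_mul_distrib, Finset.prod_const, Finset.card_univ, Fintype.card_fin,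
        ← Real.exp_sum]
    rw [hprod]
    have hsum : ∑ i, -(y i - f i - r * ξ) ^ 2 / 2
        = -(S2 - 2*(r*ξ)*S1 + n*(r*ξ)^2)/2 := by
      have h1 : ∀ i : Fin n, -(y i - f i - r * ξ) ^ 2 / 2
          = -(1/2)*(y i - f i)^2 + (r*ξ)*(y i - f i) + (-(1/2))*(r*ξ)^2 := fun i => by ring
      rw [Finset.sum_congr rfl fun i _ => h1 i]
      rw [Finset.sum_add_distrib, Finset.sum_add_distrib, ← Finset.mul_sum, ← Finset.mul_sum,
        Finset.sum_const, Finset.card_univ, Fintype.card_fin, nsmul_eq_mul, hS1, hS2]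
      ring
    rw [hsum]
    have hexp : -(S2 - 2*(r*ξ)*S1 + n*(r*ξ)^2)/2 + -ξ^2/2
        = -(S2 - r^2*S1^2/a)/2 + -(a/2) * (ξ - μ0)^2 := by
      rw [hμ0, haa]
      field_simp
      ring
    calc c ^ n * Real.exp (-(S2 - 2*(r*ξ)*S1 + n*(r*ξ)^2)/2) * (c * Real.exp (-ξ ^ 2 / 2))
        = c^n * c * Real.exp (-(S2 - 2*(r*ξ)*S1 + n*(r*ξ)^2)/2 + -ξ^2/2) := by
          rw [Real.exp_add]; ring
      _ = c^n * c * Real.exp (-(S2 - r^2*S1^2/a)/2 + -(a/2) * (ξ - μ0)^2) := by rw [hexp]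
      _ = K * Real.exp (-(a/2) * (ξ - μ0)^2) := by
          rw [hKdef, Real.exp_add]; ring
  have := gauss_main a K μ0 ha hKpos q hq' I hI IM hIM Δ hΔ
  convert this using 2
end

section
/- Let n ≥ 1, r ∈ ℝ, f_1,…,f_n ∈ ℝ and y_1,…,y_n ∈ ℝ, and define q(ξ) = (∏_{i=1}^n (2π)^{-1/2} exp(−(y_i − f_i − rξ)²/2))·φ(ξ), with I = ∫_ℝ q, I_M = ∫_{−M}^{M} q, and Δ_M = log I − log I_M. Then for every constant C > 0, lim_{M→∞} (1/M²)·( log((C/M)·exp(−M²/2)) − log Δ_M ) = n r²/2. -/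
open MeasureTheory Filter

lemma stmt7_gauss_int (s c : ℝ) (hs : 0 < s) (K : ℝ) :
    Integrable (fun ξ : ℝ => K * Real.exp (-(s * (ξ - c) ^ 2) / 2)) := by
  have h1 : Integrable (fun x : ℝ => Real.exp (-(s/2) * x ^ 2)) :=
    integrable_exp_neg_mul_sq (by linarith)
  have h2 := (h1.comp_sub_right c).const_mul K
  convert h2 using 2 with ξ
  ring_nf

lemma stmt7_gauss_shift (s c : ℝ) (K : ℝ) :
    (∫ ξ : ℝ, K * Real.exp (-(s * (ξ - c) ^ 2) / 2))
      = ∫ ξ : ℝ, K * Real.exp (-(s * ξ ^ 2) / 2) :=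
  integral_sub_right_eq_self (fun u => K * Real.exp (-(s * u ^ 2) / 2)) c

lemma stmt7_tends_quad (c d e : ℝ) :
    Tendsto (fun M : ℝ => (c + e * (M + d) ^ 2) / M ^ 2) atTop (nhds e) := by
  have ht : Tendsto (fun M : ℝ => M⁻¹) atTop (nhds 0) := tendsto_inv_atTop_zero
  have h : Tendsto (fun M : ℝ => c * (M⁻¹) ^ 2 + e * (1 + d * M⁻¹) ^ 2) atTop
      (nhds (c * 0 ^ 2 + e * (1 + d * 0) ^ 2)) :=
    ((tendsto_const_nhds.mul (ht.pow 2)).add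
      (tendsto_const_nhds.mul ((tendsto_const_nhds.add (tendsto_const_nhds.mul ht)).pow 2)))
  have h2 : Tendsto (fun M : ℝ => c * (M⁻¹) ^ 2 + e * (1 + d * M⁻¹) ^ 2) atTop (nhds e) := by
    simpa using h
  refine h2.congr' ?_
  filter_upwards [eventually_gt_atTop 0] with M hM
  field_simp

lemma stmt7_density (n : ℕ) (r : ℝ) (a : Fin n → ℝ) (ξ : ℝ) :
    (∏ i, (Real.sqrt (2 * Real.pi))⁻¹ * Real.exp (-(a i - r * ξ) ^ 2 / 2)) * phi ξ
    = ((Real.sqrt (2 * Real.pi))⁻¹ ^ (n + 1) *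
        Real.exp (-((∑ i, (a i) ^ 2)
          - (n * r ^ 2 + 1) * (r * (∑ i, a i) / (n * r ^ 2 + 1)) ^ 2) / 2))
      * Real.exp (-((n * r ^ 2 + 1) * (ξ - r * (∑ i, a i) / (n * r ^ 2 + 1)) ^ 2) / 2) := by
  set s : ℝ := n * r ^ 2 + 1 with hs
  have hs0 : (0:ℝ) < s := by positivity
  set m : ℝ := r * (∑ i, a i) / s with hm
  clear_value m
  clear_value s
  rw [phi, Finset.prod_mul_distrib, Finset.prod_const, ← Real.exp_sum, Finset.card_univ,
    Fintype.card_fin]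
  have hsum : (∑ i, -(a i - r * ξ) ^ 2 / 2)
      = -(∑ i, (a i) ^ 2) / 2 + (r * ξ) * (∑ i, a i) - n * (r ^ 2 * ξ ^ 2 / 2) := by
    have h1 : ∀ i : Fin n, -(a i - r * ξ) ^ 2 / 2
        = -(a i) ^ 2 / 2 + (r * ξ) * (a i) - r ^ 2 * ξ ^ 2 / 2 := fun i => by ring
    rw [Finset.sum_congr rfl fun i _ => h1 i, Finset.sum_sub_distrib, Finset.sum_add_distrib,
      ← Finset.sum_div, ← Finset.mul_sum, Finset.sum_const, Finset.card_univ, Fintype.card_fin,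
      nsmul_eq_mul, ← Finset.sum_neg_distrib]
  have key : ∀ c eX eY : ℝ, c ^ n * Real.exp eX * (c * Real.exp eY)
      = c ^ (n + 1) * Real.exp (eX + eY) := by
    intro c eX eY; rw [Real.exp_add]; ring
  rw [hsum, key, mul_assoc _ (Real.exp _) (Real.exp _), ← Real.exp_add]
  congr 2
  have hmeq : s * m = r * (∑ i, a i) := by rw [hm]; field_simp
  linear_combination (-ξ) * hmeq + ξ ^ 2 / 2 * hs

set_option maxHeartbeats 2000000 in
/-- Asymptotic looseness of the generic truncation bound in the Gaussian NGMM: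
on the logarithmic scale, the gap between the generic bound `(C/M)·exp(−M²/2)` and
the true truncation error `Δ_M` grows quadratically in `M` with slope `n r²/2`. -/
theorem stmt_7 (n : ℕ) (hn : 1 ≤ n) (r : ℝ) (f y : Fin n → ℝ)
    (q : ℝ → ℝ)
    (hq : ∀ ξ, q ξ =
      (∏ i, (Real.sqrt (2 * Real.pi))⁻¹ * Real.exp (-(y i - f i - r * ξ) ^ 2 / 2)) * phi ξ)
    (I : ℝ) (hI : I = ∫ ξ : ℝ, q ξ)
    (IM : ℝ → ℝ) (hIM : ∀ M, IM M = ∫ ξ in (-M)..M, q ξ)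
    (Δ : ℝ → ℝ) (hΔ : ∀ M, Δ M = Real.log I - Real.log (IM M)) :
    ∀ C > (0 : ℝ),
      Tendsto
        (fun M => (1 / M ^ 2) *
          (Real.log (C / M * Real.exp (-M ^ 2 / 2)) - Real.log (Δ M)))
        atTop (nhds (n * r ^ 2 / 2)) := by
  intro C hC
  set s : ℝ := (n : ℝ) * r ^ 2 + 1 with hsdef
  have hs0 : (0:ℝ) < s := by positivity
  have hs1 : (1:ℝ) ≤ s := by
    rw [hsdef]; nlinarith [sq_nonneg r, Nat.cast_nonneg (α := ℝ) n]
  set m : ℝ := r * (∑ i, (y i - f i)) / s with hmdef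
  set K : ℝ := (Real.sqrt (2 * Real.pi))⁻¹ ^ (n + 1) *
      Real.exp (-((∑ i, (y i - f i) ^ 2) - s * m ^ 2) / 2) with hKdef
  have hK : 0 < K := by
    rw [hKdef]
    have h2π : 0 < Real.sqrt (2 * Real.pi) := Real.sqrt_pos.2 (by positivity)
    positivity
  set g : ℝ → ℝ := fun ξ => K * Real.exp (-(s * (ξ - m) ^ 2) / 2) with hgdef
  have hqg : q = g := by
    funext ξ
    rw [hq ξ, hgdef, hKdef, hmdef, hsdef]
    exact stmt7_density n r (fun i => y i - f i) ξ
  have hgpos : ∀ ξ, 0 < g ξ := fun ξ => by simp only [hgdef]; positivity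
  have hgint : Integrable g := by rw [hgdef]; exact stmt7_gauss_int s m hs0 K
  have hgnn : (0:ℝ → ℝ) ≤ᵐ[volume] g := Filter.Eventually.of_forall fun ξ => (hgpos ξ).le
  have hIg : I = ∫ ξ, g ξ := by rw [hI, hqg]
  have hIpos : 0 < I := by
    have h01 : 0 < ∫ x in (0:ℝ)..1, g x :=
      intervalIntegral.intervalIntegral_pos_of_pos_on hgint.intervalIntegrable (fun x _ => hgpos x) one_pos
    have h02 : (∫ x in (0:ℝ)..1, g x) ≤ ∫ x, g x := by
      rw [intervalIntegral.integral_of_le zero_le_one]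
      exact setIntegral_le_integral hgint hgnn
    rw [hIg]; linarith
  have hIval : I = ∫ x : ℝ, K * Real.exp (-(s * x ^ 2) / 2) := by
    rw [hIg, hgdef]; exact stmt7_gauss_shift s m K
  set b : ℝ := |m| with hbdef
  have hb0 : 0 ≤ b := abs_nonneg m
  have hm_le : m ≤ b := le_abs_self m
  have hm_ge : -b ≤ m := neg_abs_le m
  set c₁ : ℝ := Real.log K - Real.log I with hc₁
  clear_value c₁
  clear_value b
  clear_value g
  clear_value K
  clear_value m
  clear_value s
  -- the squeeze on log (Δ M) / M ^ 2
  have hsq : ∀ᶠ M in atTop,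
      (c₁ + (-s/2) * (M + (b+1)) ^ 2) / M ^ 2 ≤ Real.log (Δ M) / M ^ 2 ∧
      Real.log (Δ M) / M ^ 2 ≤ (Real.log 4 + (-s/2) * (M + (-b)) ^ 2) / M ^ 2 := by
    filter_upwards [eventually_ge_atTop (b + 2)] with M hMb
    have hM1 : (1:ℝ) ≤ M := by linarith
    have hM0 : (0:ℝ) < M := by linarith
    have hMM : -M ≤ M := by linarith
    have hIMg : IM M = ∫ ξ in Set.Ioc (-M) M, g ξ := by
      rw [hIM M, hqg, intervalIntegral.integral_of_le hMM]
    have hIMpos : 0 < IM M := by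
      rw [hIM M, hqg]
      exact intervalIntegral.intervalIntegral_pos_of_pos_on hgint.intervalIntegrable
        (fun x _ => hgpos x) (by linarith)
    set T : ℝ := ∫ ξ in (Set.Ioc (-M) M)ᶜ, g ξ with hTdef
    clear_value T
    have hsplit : IM M + T = I := by
      rw [hIMg, hTdef, hIg]
      exact integral_add_compl measurableSet_Ioc hgint
    have hcompl : (Set.Ioc (-M) M)ᶜ = Set.Iic (-M) ∪ Set.Ioi M := by
      ext x
      simp only [Set.mem_compl_iff, Set.mem_Ioc, not_and, not_le, Set.mem_union,
        Set.mem_Iic, Set.mem_Ioi]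
      constructor
      · intro h
        rcases le_or_gt x (-M) with h' | h'
        · exact Or.inl h'
        · exact Or.inr (h h')
      · rintro (h | h) h'
        · linarith
        · exact h
    -- lower bound on the tail T
    have hTlow : K * Real.exp (-(s * (M + (b+1)) ^ 2) / 2) ≤ T := by
      have hsub : Set.Ioc M (M + 1) ⊆ (Set.Ioc (-M) M)ᶜ := by
        intro x hx
        simp only [Set.mem_Ioc] at hx
        simp only [Set.mem_compl_iff, Set.mem_Ioc, not_and, not_le]
        intro _; exact hx.1
      have hconst : K * Real.exp (-(s * (M + (b+1)) ^ 2) / 2)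
          = ∫ _x in Set.Ioc M (M + 1), (K * Real.exp (-(s * (M + (b+1)) ^ 2) / 2)) := by
        rw [setIntegral_const, Real.volume_real_Ioc]
        norm_num
      rw [hconst, hTdef]
      have step1 : (∫ _x in Set.Ioc M (M + 1), (K * Real.exp (-(s * (M + (b+1)) ^ 2) / 2)))
          ≤ ∫ x in Set.Ioc M (M + 1), g x := by
        refine setIntegral_mono_on (integrableOn_const ?_) hgint.integrableOn
          measurableSet_Ioc ?_
        · rw [Real.volume_Ioc]; exact ENNReal.ofReal_ne_top
        · intro x hx
          simp only [Set.mem_Ioc] at hx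
          simp only [hgdef]
          refine mul_le_mul_of_nonneg_left (Real.exp_le_exp.2 ?_) hK.le
          have h1 : 0 ≤ x - m := by linarith
          have h2 : x - m ≤ M + (b + 1) := by linarith
          have h3 := pow_le_pow_left₀ h1 h2 2
          linarith [mul_le_mul_of_nonneg_left h3 hs0.le]
      have step2 : (∫ x in Set.Ioc M (M + 1), g x) ≤ ∫ x in (Set.Ioc (-M) M)ᶜ, g x :=
        setIntegral_mono_set hgint.integrableOn
          (Filter.Eventually.of_forall fun x => (hgpos x).le)
          (HasSubset.Subset.eventuallyLE hsub)
      linarith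
    have hTpos : 0 < T := lt_of_lt_of_le (by positivity) hTlow
    set E : ℝ := Real.exp (-(s * (M - b) ^ 2) / 2) with hEdef
    clear_value E
    have hEpos : 0 < E := by rw [hEdef]; exact Real.exp_pos _
    -- a generic tail bound
    have tail_bound : ∀ (S : Set ℝ) (c : ℝ), MeasurableSet S →
        (∀ x ∈ S, g x ≤ E * (K * Real.exp (-(s * (x - c) ^ 2) / 2))) →
        (∫ x in S, g x) ≤ E * I := by
      intro S c hSm hpt
      have hint2 : Integrable (fun x : ℝ => E * (K * Real.exp (-(s * (x - c) ^ 2) / 2))) :=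
        (stmt7_gauss_int s c hs0 K).const_mul E
      have h1 : (∫ x in S, g x) ≤ ∫ x in S, E * (K * Real.exp (-(s * (x - c) ^ 2) / 2)) :=
        setIntegral_mono_on hgint.integrableOn hint2.integrableOn hSm hpt
      have h2 : (∫ x in S, E * (K * Real.exp (-(s * (x - c) ^ 2) / 2)))
          ≤ ∫ x : ℝ, E * (K * Real.exp (-(s * (x - c) ^ 2) / 2)) := by
        refine setIntegral_le_integral hint2 (Filter.Eventually.of_forall fun x => ?_)
        positivity
      have h3 : (∫ x : ℝ, E * (K * Real.exp (-(s * (x - c) ^ 2) / 2))) = E * I := by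
        rw [integral_const_mul, stmt7_gauss_shift s c K, ← hIval]
      linarith
    have hexp_comb : ∀ D : ℝ, E * (K * Real.exp D)
        = K * Real.exp (-(s * (M - b) ^ 2) / 2 + D) := by
      intro D; rw [hEdef, Real.exp_add]; ring
    have hub1 : (∫ x in Set.Ioi M, g x) ≤ E * I := by
      refine tail_bound (Set.Ioi M) M measurableSet_Ioi ?_
      intro x hx
      simp only [Set.mem_Ioi] at hx
      rw [hexp_comb]
      simp only [hgdef]
      refine mul_le_mul_of_nonneg_left (Real.exp_le_exp.2 ?_) hK.le
      have e1 : (M - b) ^ 2 ≤ (M - m) ^ 2 := pow_le_pow_left₀ (by linarith) (by linarith) 2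
      have e2 : 0 ≤ (x - M) * (M - m) := mul_nonneg (by linarith) (by linarith)
      have id1 : (x - m) ^ 2 = (x - M) ^ 2 + 2 * ((x - M) * (M - m)) + (M - m) ^ 2 := by ring
      have e3 : (M - b) ^ 2 + (x - M) ^ 2 ≤ (x - m) ^ 2 := by linarith
      linarith [mul_le_mul_of_nonneg_left e3 hs0.le]
    have hub2 : (∫ x in Set.Iic (-M), g x) ≤ E * I := by
      refine tail_bound (Set.Iic (-M)) (-M) measurableSet_Iic ?_
      intro x hx
      simp only [Set.mem_Iic] at hx
      rw [hexp_comb]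
      simp only [hgdef]
      refine mul_le_mul_of_nonneg_left (Real.exp_le_exp.2 ?_) hK.le
      have e1 : (M - b) ^ 2 ≤ (M + m) ^ 2 := pow_le_pow_left₀ (by linarith) (by linarith) 2
      have e2 : 0 ≤ (-M - x) * (M + m) := mul_nonneg (by linarith) (by linarith)
      have id1 : (x - m) ^ 2 = (x - (-M)) ^ 2 + 2 * ((-M - x) * (M + m)) + (M + m) ^ 2 := by ring
      have e3 : (M - b) ^ 2 + (x - (-M)) ^ 2 ≤ (x - m) ^ 2 := by linarith
      linarith [mul_le_mul_of_nonneg_left e3 hs0.le]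
    have hTub : T ≤ 2 * (E * I) := by
      have : T = (∫ x in Set.Iic (-M), g x) + ∫ x in Set.Ioi M, g x := by
        rw [hTdef, hcompl]
        exact setIntegral_union (Set.Iic_disjoint_Ioi hMM) measurableSet_Ioi
          hgint.integrableOn hgint.integrableOn
      linarith
    -- E is small
    have hE14 : E ≤ 1/4 := by
      have h4 : (4:ℝ) < Real.exp 2 := by
        have h1 := Real.exp_one_gt_d9
        have h2 : Real.exp 2 = Real.exp 1 * Real.exp 1 := by
          rw [← Real.exp_add]; norm_num
        have h3 : (2.7182818283:ℝ) * 2.7182818283 ≤ Real.exp 1 * Real.exp 1 :=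
          mul_le_mul h1.le h1.le (by norm_num) (Real.exp_pos 1).le
        rw [h2]; linarith [h3]
      have hexp : E ≤ Real.exp (-2) := by
        rw [hEdef]
        refine Real.exp_le_exp.2 ?_
        have h5 : (2:ℝ) ≤ M - b := by linarith
        have h6 : (4:ℝ) ≤ (M - b) ^ 2 := by
          have h7 := mul_le_mul h5 h5 (by norm_num) (by linarith : (0:ℝ) ≤ M - b)
          rw [sq]; linarith
        linarith [mul_le_mul_of_nonneg_left h6 hs0.le, hs1]
      have h9 : (Real.exp 2)⁻¹ ≤ (4:ℝ)⁻¹ := inv_anti₀ (by norm_num) h4.le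
      rw [Real.exp_neg] at hexp
      have h10 : ((4:ℝ))⁻¹ = 1/4 := by norm_num
      linarith
    have hTub2 : T ≤ I / 2 := by
      have e8 : E * I ≤ (1/4) * I := mul_le_mul_of_nonneg_right hE14 hIpos.le
      linarith
    have hIMhalf : I / 2 ≤ IM M := by linarith
    -- lower bound on Δ M
    have hΔlow : T / I ≤ Δ M := by
      have hld := Real.log_le_sub_one_of_pos (div_pos hIMpos hIpos)
      have heq : Real.log (IM M / I) = Real.log (IM M) - Real.log I :=
        Real.log_div hIMpos.ne' hIpos.ne'
      have hfrac : IM M / I - 1 = -(T / I) := by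
        field_simp
        linarith
      rw [hΔ M]
      linarith
    have hΔup : Δ M ≤ T / IM M := by
      have hld := Real.log_le_sub_one_of_pos (div_pos hIpos hIMpos)
      have heq : Real.log (I / IM M) = Real.log I - Real.log (IM M) :=
        Real.log_div hIpos.ne' hIMpos.ne'
      have hfrac : I / IM M - 1 = T / IM M := by
        field_simp
        linarith
      rw [hΔ M]
      linarith
    have hΔpos : 0 < Δ M := lt_of_lt_of_le (div_pos hTpos hIpos) hΔlow
    have hΔ4E : Δ M ≤ 4 * E := by
      have h1 : T / IM M ≤ T / (I / 2) :=
        (div_le_div_iff_of_pos_left hTpos hIMpos (by linarith)).2 hIMhalf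
      have h2 : T / (I / 2) ≤ 4 * E := by
        rw [div_le_iff₀ (by linarith : (0:ℝ) < I / 2)]
        nlinarith [hTub]
      linarith
    -- logarithmic bounds
    have hlb : c₁ + (-s/2) * (M + (b+1)) ^ 2 ≤ Real.log (Δ M) := by
      have hKE : (0:ℝ) < K * Real.exp (-(s * (M + (b+1)) ^ 2) / 2) := by positivity
      have h1 : K * Real.exp (-(s * (M + (b+1)) ^ 2) / 2) / I ≤ Δ M :=
        le_trans ((div_le_div_iff_of_pos_right hIpos).2 hTlow) hΔlow
      have h2 := Real.log_le_log (div_pos hKE hIpos) h1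
      rw [Real.log_div hKE.ne' hIpos.ne', Real.log_mul hK.ne' (Real.exp_ne_zero _),
        Real.log_exp] at h2
      rw [hc₁]
      linarith
    have hub : Real.log (Δ M) ≤ Real.log 4 + (-s/2) * (M + (-b)) ^ 2 := by
      have h2 := Real.log_le_log hΔpos hΔ4E
      rw [Real.log_mul (by norm_num) hEpos.ne', hEdef, Real.log_exp] at h2
      have hrg : (-(s * (M - b) ^ 2) / 2) = (-s/2) * (M + (-b)) ^ 2 := by ring
      rw [hrg] at h2
      exact h2
    exact ⟨(div_le_div_iff_of_pos_right (by positivity)).2 hlb, (div_le_div_iff_of_pos_right (by positivity)).2 hub⟩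
  have hlogΔ : Tendsto (fun M => Real.log (Δ M) / M ^ 2) atTop (nhds (-s/2)) :=
    tendsto_of_tendsto_of_tendsto_of_le_of_le' (stmt7_tends_quad c₁ (b+1) (-s/2))
      (stmt7_tends_quad (Real.log 4) (-b) (-s/2))
      (hsq.mono fun M h => h.1) (hsq.mono fun M h => h.2)
  have h_logC : Tendsto (fun M : ℝ => Real.log C / M ^ 2) atTop (nhds 0) :=
    Tendsto.div_atTop tendsto_const_nhds (tendsto_pow_atTop two_ne_zero)
  have h_logM : Tendsto (fun M : ℝ => Real.log M / M ^ 2) atTop (nhds 0) := by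
    refine tendsto_of_tendsto_of_tendsto_of_le_of_le' tendsto_const_nhds
      tendsto_inv_atTop_zero ?_ ?_
    · filter_upwards [eventually_ge_atTop (1:ℝ)] with M hM
      exact div_nonneg (Real.log_nonneg hM) (by positivity)
    · filter_upwards [eventually_ge_atTop (1:ℝ)] with M hM
      have hM0 : (0:ℝ) < M := by linarith
      have h1 : Real.log M ≤ M := (Real.log_le_sub_one_of_pos hM0).trans (by linarith)
      have h2 : M / M ^ 2 = M⁻¹ := by field_simp
      rw [← h2]
      exact (div_le_div_iff_of_pos_right (by positivity)).2 h1
  have hfin : Tendsto (fun M : ℝ => Real.log C / M ^ 2 - Real.log M / M ^ 2 - 1/2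
      - Real.log (Δ M) / M ^ 2) atTop (nhds (0 - 0 - 1/2 - (-s/2))) :=
    ((h_logC.sub h_logM).sub tendsto_const_nhds).sub hlogΔ
  have hval : (0:ℝ) - 0 - 1/2 - (-s/2) = (n:ℝ) * r ^ 2 / 2 := by rw [hsdef]; ring
  refine Tendsto.congr' ?_ (hval ▸ hfin)
  filter_upwards [eventually_gt_atTop (0:ℝ)] with M hM
  rw [Real.log_mul (div_pos hC hM).ne' (Real.exp_ne_zero _), Real.log_div hC.ne' hM.ne',
    Real.log_exp]
  have hM2 : (M:ℝ) ^ 2 ≠ 0 := by positivity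
  field_simp
  ring
end

section
/- Let n ≥ 1, r ∈ ℝ, f_1,…,f_n ∈ ℝ, and y_1,…,y_n ∈ {0,1}. Define g(ξ) = ∏_{i=1}^n Φ(f_i + rξ)^{y_i}·Φ(−f_i − rξ)^{1−y_i}, and let n₁ = Σ_{i=1}^n y_i and n₀ = n − n₁. Define the tail integral R_M = ∫_{|ξ|>M} g(ξ)·φ(ξ) dξ for M > 0. Then lim_{M→∞} (1/M²)·log R_M = −min{(1 + n₀ r²)/2, (1 + n₁ r²)/2}. -/
open MeasureTheory Filter

/-- The standard normal cumulative distribution function. -/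
noncomputable def Phi (x : ℝ) : ℝ := ∫ t in Set.Iic x, phi t

open Set

lemma phi_pos (t : ℝ) : 0 < phi t := by
  have : (0:ℝ) < Real.sqrt (2 * Real.pi) := Real.sqrt_pos.2 (by positivity)
  unfold phi; positivity

lemma phi_eq : phi = fun t : ℝ => (Real.sqrt (2 * Real.pi))⁻¹ * Real.exp (-(1/2) * t ^ 2) := by
  funext t; unfold phi; congr 1; ring_nf

lemma integrable_phi : Integrable phi := by
  rw [phi_eq]
  exact (integrable_exp_neg_mul_sq (by norm_num)).const_mul _

lemma integral_phi : ∫ t, phi t = 1 := by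
  rw [phi_eq]
  rw [MeasureTheory.integral_const_mul, integral_gaussian]
  rw [show Real.pi / (1/2) = 2 * Real.pi by ring]
  rw [inv_mul_cancel₀]
  positivity

lemma Phi_nonneg (x : ℝ) : 0 ≤ Phi x :=
  setIntegral_nonneg measurableSet_Iic (fun t _ => (phi_pos t).le)

lemma Phi_le_one (x : ℝ) : Phi x ≤ 1 := by
  rw [← integral_phi]
  exact setIntegral_le_integral integrable_phi (Eventually.of_forall fun t => (phi_pos t).le)

lemma Phi_mono : Monotone Phi := fun a b hab =>
  setIntegral_mono_set integrable_phi.integrableOn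
    (Eventually.of_forall fun t => (phi_pos t).le) (HasSubset.Subset.eventuallyLE (Iic_subset_Iic.2 hab))

lemma measurable_Phi : Measurable Phi := Phi_mono.measurable

lemma Phi_lb (x : ℝ) : (Real.sqrt (2 * Real.pi))⁻¹ * Real.exp (-(|x| + 1) ^ 2 / 2) ≤ Phi x := by
  have h1 : ∫ t in Ioc (x-1) x, phi t ≤ Phi x := by
    apply setIntegral_mono_set integrable_phi.integrableOn
      (Eventually.of_forall fun t => (phi_pos t).le)
    exact HasSubset.Subset.eventuallyLE (fun t ht => ht.2)
  refine le_trans ?_ h1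
  have h2 := setIntegral_ge_of_const_le (μ := volume)
    (c := (Real.sqrt (2 * Real.pi))⁻¹ * Real.exp (-(|x| + 1) ^ 2 / 2))
    (s := Ioc (x-1) x) (f := phi) measurableSet_Ioc (by simp)
    (fun t ht => ?_) integrable_phi.integrableOn
  · calc _ = (Real.sqrt (2 * Real.pi))⁻¹ * Real.exp (-(|x| + 1) ^ 2 / 2) * (volume (Ioc (x-1) x)).toReal := by
            rw [Real.volume_Ioc]; norm_num
       _ ≤ _ := by rw [smul_eq_mul, mul_comm] at h2; exact h2
  · unfold phi
    have hle : t ^ 2 ≤ (|x| + 1) ^ 2 := by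
      have h3 : t ≤ x := ht.2
      have h4 : x - 1 < t := ht.1
      have := abs_nonneg x
      have := le_abs_self x
      have := neg_abs_le x
      nlinarith
    exact mul_le_mul_of_nonneg_left (Real.exp_le_exp.2 (by linarith)) (by positivity)

lemma Phi_pos (x : ℝ) : 0 < Phi x := lt_of_lt_of_le (by positivity) (Phi_lb x)

lemma setIntegral_Iic_add (f : ℝ → ℝ) (a c : ℝ) :
    ∫ t in Iic a, f (t + c) = ∫ t in Iic (a + c), f t := by
  have hmp : MeasurePreserving (fun x : ℝ => x + c) volume volume :=
    measurePreserving_add_right volume c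
  have he : MeasurableEmbedding (fun x : ℝ => x + c) :=
    (Homeomorph.addRight c).isClosedEmbedding.measurableEmbedding
  have := hmp.setIntegral_preimage_emb he f (Iic (a + c))
  rw [← this]
  congr 1
  ext t; simp [Set.mem_preimage]

lemma Phi_chernoff {x : ℝ} (hx : 0 ≤ x) : Phi (-x) ≤ Real.exp (-x ^ 2 / 2) := by
  have key : ∀ t ∈ Iic (-x), phi t ≤ Real.exp (-x ^ 2 / 2) * phi (t + x) := by
    intro t ht
    simp only [mem_Iic] at ht
    unfold phi
    have h2 : -t ^ 2 / 2 ≤ -x ^ 2 / 2 + -(t + x) ^ 2 / 2 := by nlinarith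
    calc (Real.sqrt (2 * Real.pi))⁻¹ * Real.exp (-t ^ 2 / 2)
        ≤ (Real.sqrt (2 * Real.pi))⁻¹ * Real.exp (-x ^ 2 / 2 + -(t + x) ^ 2 / 2) := by
          have : (0:ℝ) < Real.sqrt (2 * Real.pi) := Real.sqrt_pos.2 (by positivity)
          exact mul_le_mul_of_nonneg_left (Real.exp_le_exp.2 h2) (by positivity)
      _ = _ := by rw [Real.exp_add]; ring
  have hint : IntegrableOn (fun t => Real.exp (-x ^ 2 / 2) * phi (t + x)) (Iic (-x)) :=
    ((integrable_phi.comp_add_right x).const_mul _).integrableOn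
  calc Phi (-x) ≤ ∫ t in Iic (-x), Real.exp (-x ^ 2 / 2) * phi (t + x) := by
        exact setIntegral_mono_on integrable_phi.integrableOn hint measurableSet_Iic key
    _ = Real.exp (-x ^ 2 / 2) * ∫ t in Iic (-x), phi (t + x) := by
        rw [MeasureTheory.integral_const_mul]
    _ = Real.exp (-x ^ 2 / 2) * Phi 0 := by
        rw [setIntegral_Iic_add phi (-x) x]; unfold Phi; norm_num
    _ ≤ Real.exp (-x ^ 2 / 2) := by
        have := Phi_le_one 0
        have := Real.exp_pos (-x ^ 2 / 2)
        nlinarith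

lemma gaussian_linear_integrableOn (a b M : ℝ) (ha : 0 < a) :
    IntegrableOn (fun ξ : ℝ => Real.exp (-a * ξ ^ 2 + b * ξ)) (Ioi M) := by
  have h1 : Integrable (fun ξ : ℝ => Real.exp (b ^ 2 / (4 * a)) * Real.exp (-a * (ξ - b / (2 * a)) ^ 2)) := by
    exact ((integrable_exp_neg_mul_sq ha).comp_sub_right (b / (2 * a))).const_mul _
  have h2 : (fun ξ : ℝ => Real.exp (-a * ξ ^ 2 + b * ξ)) =
      fun ξ : ℝ => Real.exp (b ^ 2 / (4 * a)) * Real.exp (-a * (ξ - b / (2 * a)) ^ 2) := by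
    funext ξ
    rw [← Real.exp_add]
    congr 1
    field_simp
    ring
  rw [h2]
  exact h1.integrableOn

lemma hasDerivAt_G (a b ξ : ℝ) :
    HasDerivAt (fun ξ : ℝ => -Real.exp (-a * ξ ^ 2 + b * ξ))
      ((2 * a * ξ - b) * Real.exp (-a * ξ ^ 2 + b * ξ)) ξ := by
  have h : HasDerivAt (fun ξ : ℝ => -a * ξ ^ 2 + b * ξ) (-a * (2 * ξ ^ 1) + b * 1) ξ :=
    (((hasDerivAt_pow 2 ξ).const_mul (-a)).add ((hasDerivAt_id ξ).const_mul b))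
  have : HasDerivAt (fun ξ : ℝ => -Real.exp (-a * ξ ^ 2 + b * ξ)) (-(Real.exp (-a * ξ ^ 2 + b * ξ) * (-a * (2 * ξ ^ 1) + b * 1))) ξ := h.exp.neg
  convert this using 1
  ring

lemma tendsto_G (a b : ℝ) (ha : 0 < a) :
    Tendsto (fun ξ : ℝ => -Real.exp (-a * ξ ^ 2 + b * ξ)) atTop (nhds 0) := by
  rw [show (0:ℝ) = -0 by norm_num]
  apply Tendsto.neg
  apply Real.tendsto_exp_atBot.comp
  refine tendsto_atBot_mono' atTop ?_ (tendsto_neg_atBot_iff.2 (tendsto_id (α := ℝ)))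
  · filter_upwards [eventually_ge_atTop ((b+1)/a), eventually_ge_atTop (0:ℝ)] with ξ h1 h2
    rw [div_le_iff₀ ha] at h1
    simp only [id_eq]
    nlinarith [mul_le_mul_of_nonneg_left h1 h2]

lemma tail_exp_bound (a b M : ℝ) (ha : 0 < a) (hM : (b + 1) / (2 * a) ≤ M) :
    ∫ ξ in Ioi M, Real.exp (-a * ξ ^ 2 + b * ξ) ≤ Real.exp (-a * M ^ 2 + b * M) := by
  have hderiv : ∀ ξ ∈ Ici M, HasDerivAt (fun ξ : ℝ => -Real.exp (-a * ξ ^ 2 + b * ξ))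
      ((2 * a * ξ - b) * Real.exp (-a * ξ ^ 2 + b * ξ)) ξ := fun ξ _ => hasDerivAt_G a b ξ
  have hfac : ∀ ξ ∈ Ioi M, (1:ℝ) ≤ 2 * a * ξ - b := by
    intro ξ hξ
    rw [mem_Ioi] at hξ
    rw [div_le_iff₀ (by linarith)] at hM
    nlinarith
  have g'pos : ∀ ξ ∈ Ioi M, 0 ≤ (2 * a * ξ - b) * Real.exp (-a * ξ ^ 2 + b * ξ) := by
    intro ξ hξ
    have := hfac ξ hξ
    have := Real.exp_pos (-a * ξ ^ 2 + b * ξ)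
    nlinarith
  have hval : ∫ ξ in Ioi M, (2 * a * ξ - b) * Real.exp (-a * ξ ^ 2 + b * ξ)
      = Real.exp (-a * M ^ 2 + b * M) := by
    have := integral_Ioi_of_hasDerivAt_of_nonneg
      ((hasDerivAt_G a b M).continuousAt.continuousWithinAt)
      (fun ξ hξ => hasDerivAt_G a b ξ) g'pos (tendsto_G a b ha)
    rw [this]
    ring
  have hintd : IntegrableOn (fun ξ : ℝ => (2 * a * ξ - b) * Real.exp (-a * ξ ^ 2 + b * ξ)) (Ioi M) :=
    integrableOn_Ioi_deriv_of_nonneg' hderiv g'pos (tendsto_G a b ha)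
  calc ∫ ξ in Ioi M, Real.exp (-a * ξ ^ 2 + b * ξ)
      ≤ ∫ ξ in Ioi M, (2 * a * ξ - b) * Real.exp (-a * ξ ^ 2 + b * ξ) := by
        apply setIntegral_mono_on (gaussian_linear_integrableOn a b M ha) hintd measurableSet_Ioi
        intro ξ hξ
        have h1 := hfac ξ hξ
        have h2 := Real.exp_pos (-a * ξ ^ 2 + b * ξ)
        nlinarith
    _ = _ := hval

lemma log_tail_tendsto (h : ℝ → ℝ) (a b c : ℝ) (ha : 0 < a) (hb : 0 ≤ b) (hc : 0 < c)
    (hint : ∀ M, IntegrableOn h (Ioi M))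
    (hpos : ∀ᶠ ξ in atTop, 0 < h ξ)
    (hub : ∀ᶠ ξ in atTop, h ξ ≤ Real.exp (-a * ξ ^ 2 + b * ξ))
    (hlb : ∀ᶠ ξ in atTop, c * Real.exp (-a * ξ ^ 2 - b * ξ) ≤ h ξ) :
    (∀ᶠ M in atTop, 0 < ∫ ξ in Ioi M, h ξ) ∧
    Tendsto (fun M => 1 / M ^ 2 * Real.log (∫ ξ in Ioi M, h ξ)) atTop (nhds (-a)) := by
  obtain ⟨M₀, hM₀⟩ := ((hpos.and (hub.and hlb)).and
    ((eventually_ge_atTop (1:ℝ)).and (eventually_ge_atTop ((b + 1) / (2 * a))))).exists_forall_of_atTop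
  -- Lower bound on the integral for M ≥ M₀
  have LB : ∀ M ≥ M₀, c * Real.exp (-a * (M + 1) ^ 2 - b * (M + 1)) ≤ ∫ ξ in Ioi M, h ξ := by
    intro M hM
    have hsub : ∫ ξ in Ioc M (M + 1), h ξ ≤ ∫ ξ in Ioi M, h ξ := by
      apply setIntegral_mono_set (hint M)
      · rw [EventuallyLE, ae_restrict_iff' measurableSet_Ioi]
        filter_upwards with ξ hξ
        exact ((hM₀ ξ (le_trans hM (le_of_lt hξ))).1.1).le
      · exact HasSubset.Subset.eventuallyLE Ioc_subset_Ioi_self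
    refine le_trans ?_ hsub
    have hconst := setIntegral_ge_of_const_le (μ := volume)
      (c := c * Real.exp (-a * (M + 1) ^ 2 - b * (M + 1))) (s := Ioc M (M + 1)) (f := h)
      measurableSet_Ioc (by simp) (fun ξ hξ => ?_) ((hint M).mono Ioc_subset_Ioi_self le_rfl)
    · calc c * Real.exp (-a * (M + 1) ^ 2 - b * (M + 1))
          = c * Real.exp (-a * (M + 1) ^ 2 - b * (M + 1)) * (volume (Ioc M (M + 1))).toReal := by
            rw [Real.volume_Ioc]; norm_num
        _ ≤ _ := by rw [smul_eq_mul, mul_comm] at hconst; exact hconst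
    · have spec := hM₀ ξ (le_trans hM hξ.1.le)
      refine le_trans ?_ spec.1.2.2
      have h1 : -a * ξ ^ 2 - b * ξ ≥ -a * (M + 1) ^ 2 - b * (M + 1) := by
        have h2 : ξ ≤ M + 1 := hξ.2
        have h3 : 0 ≤ ξ := by linarith [spec.2.1]
        have h4 : ξ ^ 2 ≤ (M + 1) ^ 2 := pow_le_pow_left₀ h3 h2 2
        nlinarith [mul_le_mul_of_nonneg_left h4 ha.le, mul_le_mul_of_nonneg_left h2 hb]
      exact mul_le_mul_of_nonneg_left (Real.exp_le_exp.2 h1) hc.le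
  have POS : ∀ M ≥ M₀, 0 < ∫ ξ in Ioi M, h ξ := fun M hM =>
    lt_of_lt_of_le (by positivity) (LB M hM)
  have UB : ∀ M ≥ M₀, ∫ ξ in Ioi M, h ξ ≤ Real.exp (-a * M ^ 2 + b * M) := by
    intro M hM
    calc ∫ ξ in Ioi M, h ξ ≤ ∫ ξ in Ioi M, Real.exp (-a * ξ ^ 2 + b * ξ) := by
          apply setIntegral_mono_on (hint M) (gaussian_linear_integrableOn a b M ha) measurableSet_Ioi
          intro ξ hξ
          exact (hM₀ ξ (le_trans hM hξ.le)).1.2.1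
      _ ≤ _ := tail_exp_bound a b M ha (le_trans (hM₀ M₀ le_rfl).2.2 hM)
  refine ⟨eventually_atTop.2 ⟨M₀, POS⟩, ?_⟩
  -- the two explicit bounding functions
  have h0 : Tendsto (fun M : ℝ => 1 / M) atTop (nhds 0) := by
    simpa [one_div] using tendsto_inv_atTop_zero
  have upper_t : Tendsto (fun M : ℝ => 1 / M ^ 2 * (-a * M ^ 2 + b * M)) atTop (nhds (-a)) := by
    have hcont : Continuous (fun t : ℝ => -a + b * t) :=
      continuous_const.add (continuous_const.mul continuous_id)
    have := (hcont.tendsto 0).comp h0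
    simp only [Function.comp_def, mul_zero, add_zero] at this
    apply this.congr'
    filter_upwards [eventually_gt_atTop (0:ℝ)] with M hM
    field_simp
  have lower_t : Tendsto
      (fun M : ℝ => 1 / M ^ 2 * (Real.log c + (-a * (M + 1) ^ 2 - b * (M + 1)))) atTop (nhds (-a)) := by
    have hcont : Continuous (fun t : ℝ => Real.log c * t ^ 2 - a * (1 + t) ^ 2 - b * (t + t ^ 2)) :=
      ((continuous_const.mul (continuous_pow 2)).sub
        (continuous_const.mul ((continuous_const.add continuous_id).pow 2))).sub
        (continuous_const.mul (continuous_id.add (continuous_pow 2)))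
    have := (hcont.tendsto 0).comp h0
    have hval : Real.log c * (0:ℝ) ^ 2 - a * (1 + 0) ^ 2 - b * (0 + 0 ^ 2) = -a := by ring
    rw [Function.comp_def] at this
    rw [hval] at this
    apply this.congr'
    filter_upwards [eventually_gt_atTop (0:ℝ)] with M hM
    field_simp
    ring
  refine tendsto_of_tendsto_of_tendsto_of_le_of_le' lower_t upper_t ?_ ?_
  · filter_upwards [eventually_ge_atTop M₀, eventually_gt_atTop (0:ℝ)] with M hM hMpos
    have hlog : Real.log c + (-a * (M + 1) ^ 2 - b * (M + 1)) ≤ Real.log (∫ ξ in Ioi M, h ξ) := by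
      have := Real.log_le_log (by positivity) (LB M hM)
      rwa [Real.log_mul hc.ne' (Real.exp_ne_zero _), Real.log_exp] at this
    exact mul_le_mul_of_nonneg_left hlog (by positivity)
  · filter_upwards [eventually_ge_atTop M₀, eventually_gt_atTop (0:ℝ)] with M hM hMpos
    have hlog : Real.log (∫ ξ in Ioi M, h ξ) ≤ -a * M ^ 2 + b * M := by
      have := Real.log_le_log (POS M hM) (UB M hM)
      rwa [Real.log_exp] at this
    exact mul_le_mul_of_nonneg_left hlog (by positivity)

lemma sqrt_two_pi_ge_one : (1:ℝ) ≤ Real.sqrt (2 * Real.pi) := by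
  rw [show (1:ℝ) = Real.sqrt 1 by simp]
  exact Real.sqrt_le_sqrt (by nlinarith [Real.pi_gt_three])

lemma phi_le (ξ : ℝ) : phi ξ ≤ Real.exp (-ξ ^ 2 / 2) := by
  unfold phi
  have h1 := sqrt_two_pi_ge_one
  have h2 : (Real.sqrt (2 * Real.pi))⁻¹ ≤ 1 := inv_le_one_of_one_le₀ h1
  have h3 := Real.exp_pos (-ξ ^ 2 / 2)
  nlinarith

lemma factor_ub (r ξ fi : ℝ) (hr : 0 ≤ r) (hξ : 0 ≤ ξ) (yi : ℕ) (hyi : yi ≤ 1)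
    (hc : r = 0 ∨ |fi| ≤ r * ξ) :
    Phi (fi + r * ξ) ^ yi * Phi (-fi - r * ξ) ^ (1 - yi) ≤
      Real.exp (((1 - yi : ℕ) : ℝ) * (-(r ^ 2 * ξ ^ 2) / 2 + r * (|fi| + 1) * ξ)) := by
  rcases Nat.le_one_iff_eq_zero_or_eq_one.1 hyi with h | h <;> subst h
  · -- yi = 0
    simp only [pow_zero, pow_one, one_mul, Nat.sub_zero, Nat.cast_one]
    rcases hc with hr0 | hfi
    · subst hr0
      simp only [zero_mul, mul_zero, add_zero]
      norm_num
      exact Phi_le_one _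
    · have h1 : 0 ≤ fi + r * ξ := by
        have := neg_abs_le fi
        linarith
      have h2 : -fi - r * ξ = -(fi + r * ξ) := by ring
      rw [h2]
      calc Phi (-(fi + r * ξ)) ≤ Real.exp (-(fi + r * ξ) ^ 2 / 2) := Phi_chernoff h1
        _ ≤ _ := by
          apply Real.exp_le_exp.2
          have h3 := neg_abs_le fi
          have h4 : 0 ≤ r * ξ := mul_nonneg hr hξ
          have h5 : 0 ≤ |fi| := abs_nonneg fi
          nlinarith [sq_nonneg fi, mul_le_mul_of_nonneg_right h3 h4]
  · -- yi = 1
    simp only [pow_one, Nat.sub_self, pow_zero, mul_one, Nat.cast_zero, zero_mul, Real.exp_zero]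
    exact Phi_le_one _

lemma factor_lb (r ξ fi : ℝ) (hr : 0 ≤ r) (hξ : 0 ≤ ξ) (yi : ℕ) (hyi : yi ≤ 1) :
    Phi fi ^ yi * ((Real.sqrt (2 * Real.pi))⁻¹ * Real.exp (-(|fi| + 1) ^ 2 / 2)) ^ (1 - yi) *
      Real.exp (((1 - yi : ℕ) : ℝ) * (-(r ^ 2 * ξ ^ 2) / 2 - r * (|fi| + 1) * ξ)) ≤
    Phi (fi + r * ξ) ^ yi * Phi (-fi - r * ξ) ^ (1 - yi) := by
  rcases Nat.le_one_iff_eq_zero_or_eq_one.1 hyi with h | h <;> subst h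
  · -- yi = 0
    simp only [pow_zero, pow_one, one_mul, Nat.sub_zero, Nat.cast_one]
    calc (Real.sqrt (2 * Real.pi))⁻¹ * Real.exp (-(|fi| + 1) ^ 2 / 2) *
          Real.exp (-(r ^ 2 * ξ ^ 2) / 2 - r * (|fi| + 1) * ξ)
        = (Real.sqrt (2 * Real.pi))⁻¹ *
            Real.exp (-(|fi| + 1) ^ 2 / 2 + (-(r ^ 2 * ξ ^ 2) / 2 - r * (|fi| + 1) * ξ)) := by
          rw [Real.exp_add]; ring
      _ ≤ (Real.sqrt (2 * Real.pi))⁻¹ * Real.exp (-(|(-fi - r * ξ)| + 1) ^ 2 / 2) := by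
          have hs : (0:ℝ) < Real.sqrt (2 * Real.pi) := lt_of_lt_of_le one_pos sqrt_two_pi_ge_one
          apply mul_le_mul_of_nonneg_left _ (by positivity)
          apply Real.exp_le_exp.2
          have habs : |(-fi - r * ξ)| ≤ |fi| + r * ξ := by
            calc |(-fi - r * ξ)| = |(-(fi + r * ξ))| := by ring_nf
              _ = |fi + r * ξ| := abs_neg _
              _ ≤ |fi| + |r * ξ| := abs_add_le _ _
              _ = |fi| + r * ξ := by rw [abs_of_nonneg (mul_nonneg hr hξ)]
          have h5 : 0 ≤ |fi| := abs_nonneg fi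
          have h6 : 0 ≤ |(-fi - r * ξ)| := abs_nonneg _
          have h4 : 0 ≤ r * ξ := mul_nonneg hr hξ
          nlinarith [sq_nonneg (|fi| + r * ξ + 1)]
      _ ≤ Phi (-fi - r * ξ) := Phi_lb _
  · -- yi = 1
    simp only [pow_one, Nat.sub_self, pow_zero, mul_one, Nat.cast_zero, zero_mul, Real.exp_zero]
    exact Phi_mono (by nlinarith : fi ≤ fi + r * ξ)

lemma side_tendsto (n : ℕ) (r : ℝ) (hr : 0 ≤ r) (f : Fin n → ℝ) (y : Fin n → ℕ)
    (hy : ∀ i, y i ≤ 1) (G : ℝ → ℝ)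
    (hG : ∀ ξ, G ξ = ∏ i, Phi (f i + r * ξ) ^ (y i) * Phi (-(f i) - r * ξ) ^ (1 - y i))
    (k : ℕ) (hk : (k:ℝ) = ∑ i, ((1 - y i : ℕ) : ℝ)) :
    (∀ᶠ M in atTop, 0 < ∫ ξ in Ioi M, G ξ * phi ξ) ∧
    Tendsto (fun M => 1 / M ^ 2 * Real.log (∫ ξ in Ioi M, G ξ * phi ξ)) atTop
      (nhds (-((1 + (k:ℝ) * r ^ 2) / 2))) := by
  set a : ℝ := (1 + (k:ℝ) * r ^ 2) / 2 with ha_def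
  set b : ℝ := r * ∑ i, (|f i| + 1) with hb_def
  set c : ℝ := (Real.sqrt (2 * Real.pi))⁻¹ *
    ∏ i, Phi (f i) ^ (y i) * ((Real.sqrt (2 * Real.pi))⁻¹ * Real.exp (-(|f i| + 1) ^ 2 / 2)) ^ (1 - y i)
    with hc_def
  have hsqrt : (0:ℝ) < Real.sqrt (2 * Real.pi) := lt_of_lt_of_le one_pos sqrt_two_pi_ge_one
  have ha : 0 < a := by
    have : (0:ℝ) ≤ (k:ℝ) * r ^ 2 := by positivity
    rw [ha_def]; linarith
  have hb : 0 ≤ b := by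
    rw [hb_def]
    apply mul_nonneg hr
    apply Finset.sum_nonneg
    intro i _
    positivity
  have hc : 0 < c := by
    rw [hc_def]
    apply mul_pos (by positivity)
    apply Finset.prod_pos
    intro i _
    apply mul_pos (pow_pos (Phi_pos _) _) (pow_pos (by positivity) _)
  -- G is bounded by 1 and positive
  have hG01 : ∀ ξ, 0 < G ξ ∧ G ξ ≤ 1 := by
    intro ξ
    constructor
    · rw [hG ξ]
      apply Finset.prod_pos
      intro i _
      exact mul_pos (pow_pos (Phi_pos _) _) (pow_pos (Phi_pos _) _)
    · rw [hG ξ]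
      apply Finset.prod_le_one
      · intro i _
        exact mul_nonneg (pow_nonneg (Phi_nonneg _) _) (pow_nonneg (Phi_nonneg _) _)
      · intro i _
        calc Phi (f i + r * ξ) ^ y i * Phi (-f i - r * ξ) ^ (1 - y i)
            ≤ 1 ^ y i * 1 ^ (1 - y i) := by
              apply mul_le_mul (pow_le_pow_left₀ (Phi_nonneg _) (Phi_le_one _) _)
                (pow_le_pow_left₀ (Phi_nonneg _) (Phi_le_one _) _)
                (pow_nonneg (Phi_nonneg _) _) (by norm_num)
          _ = 1 := by norm_num
  -- measurability
  have hGmeas : Measurable G := by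
    have : G = fun ξ => ∏ i, Phi (f i + r * ξ) ^ (y i) * Phi (-(f i) - r * ξ) ^ (1 - y i) :=
      funext hG
    rw [this]
    apply Finset.measurable_prod
    intro i _
    apply Measurable.mul
    · exact (measurable_Phi.comp (measurable_const.add (measurable_id.const_mul r))).pow_const _
    · exact (measurable_Phi.comp (measurable_const.sub (measurable_id.const_mul r))).pow_const _
  have hint : ∀ M, IntegrableOn (fun ξ => G ξ * phi ξ) (Ioi M) := by
    intro M
    apply Integrable.integrableOn
    apply Integrable.mono' integrable_phi
    · exact (hGmeas.mul (measurable_const.mul ((measurable_id.pow_const 2).neg.div_const 2).exp)).aestronglyMeasurable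
    · filter_upwards with ξ
      have h1 := (hG01 ξ).1
      have h2 := (hG01 ξ).2
      have h3 := phi_pos ξ
      rw [Real.norm_eq_abs, abs_of_nonneg (by positivity)]
      nlinarith
  have hpos : ∀ᶠ ξ in atTop, 0 < G ξ * phi ξ :=
    Eventually.of_forall fun ξ => mul_pos (hG01 ξ).1 (phi_pos ξ)
  -- eventual condition for the Chernoff bound
  have hcond : ∀ᶠ ξ : ℝ in atTop, ∀ i, r = 0 ∨ |f i| ≤ r * ξ := by
    rcases hr.eq_or_lt with hr0 | hrpos
    · exact Eventually.of_forall fun ξ i => Or.inl hr0.symm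
    · refine eventually_all.2 fun i => ?_
      filter_upwards [eventually_ge_atTop (|f i| / r)] with ξ hξ
      right
      rw [div_le_iff₀ hrpos] at hξ
      linarith [hξ]
  have hub : ∀ᶠ ξ in atTop, G ξ * phi ξ ≤ Real.exp (-a * ξ ^ 2 + b * ξ) := by
    filter_upwards [hcond, eventually_ge_atTop (0:ℝ)] with ξ hξc hξ0
    have hprod : G ξ ≤ ∏ i, Real.exp (((1 - y i : ℕ) : ℝ) * (-(r ^ 2 * ξ ^ 2) / 2 + r * (|f i| + 1) * ξ)) := by
      rw [hG ξ]
      apply Finset.prod_le_prod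
      · intro i _
        exact mul_nonneg (pow_nonneg (Phi_nonneg _) _) (pow_nonneg (Phi_nonneg _) _)
      · intro i _
        exact factor_ub r ξ (f i) hr hξ0 (y i) (hy i) (hξc i)
    rw [← Real.exp_sum] at hprod
    calc G ξ * phi ξ
        ≤ Real.exp (∑ i, ((1 - y i : ℕ) : ℝ) * (-(r ^ 2 * ξ ^ 2) / 2 + r * (|f i| + 1) * ξ)) *
            Real.exp (-ξ ^ 2 / 2) := by
          apply mul_le_mul hprod (phi_le ξ) (phi_pos ξ).le (Real.exp_pos _).le
      _ = Real.exp ((∑ i, ((1 - y i : ℕ) : ℝ) * (-(r ^ 2 * ξ ^ 2) / 2 + r * (|f i| + 1) * ξ)) + -ξ ^ 2 / 2) := by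
          rw [Real.exp_add]
      _ ≤ Real.exp (-a * ξ ^ 2 + b * ξ) := by
          apply Real.exp_le_exp.2
          have hsum : ∑ i, ((1 - y i : ℕ) : ℝ) * (-(r ^ 2 * ξ ^ 2) / 2 + r * (|f i| + 1) * ξ)
              ≤ (k:ℝ) * (-(r ^ 2 * ξ ^ 2) / 2) + b * ξ := by
            have hsplit : ∀ i : Fin n, ((1 - y i : ℕ) : ℝ) * (-(r ^ 2 * ξ ^ 2) / 2 + r * (|f i| + 1) * ξ)
                = ((1 - y i : ℕ) : ℝ) * (-(r ^ 2 * ξ ^ 2) / 2) + ((1 - y i : ℕ) : ℝ) * (r * (|f i| + 1) * ξ) :=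
              fun i => mul_add _ _ _
            rw [Finset.sum_congr rfl fun i _ => hsplit i, Finset.sum_add_distrib,
              ← Finset.sum_mul, ← hk]
            have h2 : ∑ i, ((1 - y i : ℕ) : ℝ) * (r * (|f i| + 1) * ξ) ≤ b * ξ := by
              rw [hb_def]
              have heq : r * (∑ i, (|f i| + 1)) * ξ = ∑ i, r * (|f i| + 1) * ξ := by
                rw [Finset.mul_sum, Finset.sum_mul]
              rw [heq]
              apply Finset.sum_le_sum
              intro i _
              have hu : ((1 - y i : ℕ) : ℝ) ≤ 1 := by
                have : (1 - y i : ℕ) ≤ 1 := Nat.sub_le _ _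
                exact_mod_cast this
              have ht : 0 ≤ r * (|f i| + 1) * ξ := by positivity
              nlinarith
            linarith
          have : (k:ℝ) * (-(r ^ 2 * ξ ^ 2) / 2) + -ξ ^ 2 / 2 = -a * ξ ^ 2 := by
            rw [ha_def]; ring
          linarith
  have hlb : ∀ᶠ ξ in atTop, c * Real.exp (-a * ξ ^ 2 - b * ξ) ≤ G ξ * phi ξ := by
    filter_upwards [eventually_ge_atTop (0:ℝ)] with ξ hξ0
    have hprod : (∏ i, Phi (f i) ^ (y i) * ((Real.sqrt (2 * Real.pi))⁻¹ * Real.exp (-(|f i| + 1) ^ 2 / 2)) ^ (1 - y i) *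
        Real.exp (((1 - y i : ℕ) : ℝ) * (-(r ^ 2 * ξ ^ 2) / 2 - r * (|f i| + 1) * ξ))) ≤ G ξ := by
      rw [hG ξ]
      apply Finset.prod_le_prod
      · intro i _
        have := Real.exp_pos (((1 - y i : ℕ) : ℝ) * (-(r ^ 2 * ξ ^ 2) / 2 - r * (|f i| + 1) * ξ))
        have h1 : (0:ℝ) < Phi (f i) ^ (y i) := pow_pos (Phi_pos _) _
        have h2 : (0:ℝ) < ((Real.sqrt (2 * Real.pi))⁻¹ * Real.exp (-(|f i| + 1) ^ 2 / 2)) ^ (1 - y i) :=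
          pow_pos (by positivity) _
        positivity
      · intro i _
        exact factor_lb r ξ (f i) hr hξ0 (y i) (hy i)
    have hprodeq : (∏ i, Phi (f i) ^ (y i) * ((Real.sqrt (2 * Real.pi))⁻¹ * Real.exp (-(|f i| + 1) ^ 2 / 2)) ^ (1 - y i) *
        Real.exp (((1 - y i : ℕ) : ℝ) * (-(r ^ 2 * ξ ^ 2) / 2 - r * (|f i| + 1) * ξ)))
        = (∏ i, Phi (f i) ^ (y i) * ((Real.sqrt (2 * Real.pi))⁻¹ * Real.exp (-(|f i| + 1) ^ 2 / 2)) ^ (1 - y i)) *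
          Real.exp (∑ i, ((1 - y i : ℕ) : ℝ) * (-(r ^ 2 * ξ ^ 2) / 2 - r * (|f i| + 1) * ξ)) := by
      rw [Real.exp_sum, ← Finset.prod_mul_distrib]
    have hsumlb : -a * ξ ^ 2 - b * ξ - (-ξ ^ 2 / 2) ≤ ∑ i, ((1 - y i : ℕ) : ℝ) * (-(r ^ 2 * ξ ^ 2) / 2 - r * (|f i| + 1) * ξ) := by
      have hsplit : ∀ i : Fin n, ((1 - y i : ℕ) : ℝ) * (-(r ^ 2 * ξ ^ 2) / 2 - r * (|f i| + 1) * ξ)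
          = ((1 - y i : ℕ) : ℝ) * (-(r ^ 2 * ξ ^ 2) / 2) + ((1 - y i : ℕ) : ℝ) * (-(r * (|f i| + 1) * ξ)) := by
        intro i; ring
      rw [Finset.sum_congr rfl fun i _ => hsplit i, Finset.sum_add_distrib, ← Finset.sum_mul, ← hk]
      have h2 : -(b * ξ) ≤ ∑ i, ((1 - y i : ℕ) : ℝ) * (-(r * (|f i| + 1) * ξ)) := by
        rw [hb_def]
        have heq : -(r * (∑ i, (|f i| + 1)) * ξ) = ∑ i, -(r * (|f i| + 1) * ξ) := by
          rw [Finset.mul_sum, Finset.sum_mul, ← Finset.sum_neg_distrib]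
        rw [heq]
        apply Finset.sum_le_sum
        intro i _
        have hu : ((1 - y i : ℕ) : ℝ) ≤ 1 := by
          have : (1 - y i : ℕ) ≤ 1 := Nat.sub_le _ _
          exact_mod_cast this
        have ht : -(r * (|f i| + 1) * ξ) ≤ 0 := by
          have : 0 ≤ r * (|f i| + 1) * ξ := by positivity
          linarith
        nlinarith
      have h3 : -a * ξ ^ 2 - (-ξ ^ 2 / 2) = (k:ℝ) * (-(r ^ 2 * ξ ^ 2) / 2) := by
        rw [ha_def]; ring
      linarith
    calc c * Real.exp (-a * ξ ^ 2 - b * ξ)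
        = ((Real.sqrt (2 * Real.pi))⁻¹ * Real.exp (-ξ ^ 2 / 2)) *
          ((∏ i, Phi (f i) ^ (y i) * ((Real.sqrt (2 * Real.pi))⁻¹ * Real.exp (-(|f i| + 1) ^ 2 / 2)) ^ (1 - y i)) *
            Real.exp (-a * ξ ^ 2 - b * ξ - (-ξ ^ 2 / 2))) := by
          rw [hc_def]
          have hee : Real.exp (-a * ξ ^ 2 - b * ξ) =
              Real.exp (-ξ ^ 2 / 2) * Real.exp (-a * ξ ^ 2 - b * ξ - (-ξ ^ 2 / 2)) := by
            rw [← Real.exp_add]; congr 1; ring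
          rw [hee]; ring
      _ ≤ phi ξ * G ξ := by
          apply mul_le_mul
          · unfold phi; exact le_rfl
          · calc (∏ i, Phi (f i) ^ (y i) * ((Real.sqrt (2 * Real.pi))⁻¹ * Real.exp (-(|f i| + 1) ^ 2 / 2)) ^ (1 - y i)) *
                  Real.exp (-a * ξ ^ 2 - b * ξ - (-ξ ^ 2 / 2))
                ≤ (∏ i, Phi (f i) ^ (y i) * ((Real.sqrt (2 * Real.pi))⁻¹ * Real.exp (-(|f i| + 1) ^ 2 / 2)) ^ (1 - y i)) *
                  Real.exp (∑ i, ((1 - y i : ℕ) : ℝ) * (-(r ^ 2 * ξ ^ 2) / 2 - r * (|f i| + 1) * ξ)) := by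
                  apply mul_le_mul_of_nonneg_left (Real.exp_le_exp.2 hsumlb)
                  apply Finset.prod_nonneg
                  intro i _
                  exact mul_nonneg (pow_nonneg (Phi_nonneg _) _) (pow_nonneg (by positivity) _)
              _ ≤ G ξ := by rw [← hprodeq]; exact hprod
          · exact mul_nonneg (Finset.prod_nonneg fun i _ => mul_nonneg (pow_nonneg (Phi_nonneg _) _)
              (pow_nonneg (by positivity) _)) (Real.exp_pos _).le
          · exact (phi_pos ξ).le
      _ = G ξ * phi ξ := mul_comm _ _
  exact log_tail_tendsto (fun ξ => G ξ * phi ξ) a b c ha hb hc hint hpos hub hlb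

lemma phi_even (x : ℝ) : phi (-x) = phi x := by unfold phi; rw [neg_pow]; norm_num

lemma combine (A B : ℝ → ℝ) (a b : ℝ)
    (hA : ∀ᶠ M in atTop, 0 < A M) (hB : ∀ᶠ M in atTop, 0 < B M)
    (ta : Tendsto (fun M => 1 / M ^ 2 * Real.log (A M)) atTop (nhds (-a)))
    (tb : Tendsto (fun M => 1 / M ^ 2 * Real.log (B M)) atTop (nhds (-b))) :
    Tendsto (fun M => 1 / M ^ 2 * Real.log (A M + B M)) atTop (nhds (-min a b)) := by
  have hmaxlog : ∀ {u v : ℝ}, 0 < u → 0 < v → Real.log (max u v) = max (Real.log u) (Real.log v) := by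
    intro u v hu hv
    rcases le_total u v with h | h
    · rw [max_eq_right h, max_eq_right (Real.log_le_log hu h)]
    · rw [max_eq_left h, max_eq_left (Real.log_le_log hv h)]
  have hzero : Tendsto (fun M : ℝ => 1 / M ^ 2 * Real.log 2) atTop (nhds 0) := by
    have h0 : Tendsto (fun M : ℝ => 1 / M) atTop (nhds 0) := by
      simpa [one_div] using tendsto_inv_atTop_zero
    have h1 : Tendsto (fun M : ℝ => (1 / M) ^ 2) atTop (nhds 0) := by
      simpa using h0.pow 2
    have h2 : Tendsto (fun M : ℝ => (1 / M) ^ 2 * Real.log 2) atTop (nhds 0) := by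
      simpa using h1.mul_const (Real.log 2)
    apply h2.congr
    intro M
    rw [div_pow, one_pow]
  have hmax : Tendsto (fun M => max (1 / M ^ 2 * Real.log (A M)) (1 / M ^ 2 * Real.log (B M)))
      atTop (nhds (max (-a) (-b))) := ta.max tb
  have key : Tendsto (fun M => 1 / M ^ 2 * Real.log (A M + B M)) atTop (nhds (max (-a) (-b))) := by
    have hupper := hmax.add hzero
    rw [add_zero] at hupper
    refine tendsto_of_tendsto_of_tendsto_of_le_of_le' hmax hupper ?_ ?_
    · filter_upwards [hA, hB, eventually_gt_atTop (0:ℝ)] with M hAM hBM hM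
      have hmm : max (A M) (B M) ≤ A M + B M :=
        max_le (le_add_of_nonneg_right hBM.le) (le_add_of_nonneg_left hAM.le)
      have h1 : Real.log (max (A M) (B M)) ≤ Real.log (A M + B M) :=
        Real.log_le_log (lt_max_of_lt_left hAM) hmm
      rw [hmaxlog hAM hBM] at h1
      have h2 : 0 ≤ 1 / M ^ 2 := by positivity
      calc max (1 / M ^ 2 * Real.log (A M)) (1 / M ^ 2 * Real.log (B M))
          = 1 / M ^ 2 * max (Real.log (A M)) (Real.log (B M)) := by
            rcases le_total (Real.log (A M)) (Real.log (B M)) with h | h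
            · rw [max_eq_right h, max_eq_right (mul_le_mul_of_nonneg_left h h2)]
            · rw [max_eq_left h, max_eq_left (mul_le_mul_of_nonneg_left h h2)]
        _ ≤ 1 / M ^ 2 * Real.log (A M + B M) := mul_le_mul_of_nonneg_left h1 h2
    · filter_upwards [hA, hB, eventually_gt_atTop (0:ℝ)] with M hAM hBM hM
      have hmaxpos : 0 < max (A M) (B M) := lt_max_of_lt_left hAM
      have hmm : A M + B M ≤ 2 * max (A M) (B M) := by
        have := le_max_left (A M) (B M)
        have := le_max_right (A M) (B M)
        linarith
      have h1 : Real.log (A M + B M) ≤ Real.log 2 + Real.log (max (A M) (B M)) := by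
        have := Real.log_le_log (by linarith) hmm
        rwa [Real.log_mul (by norm_num) hmaxpos.ne'] at this
      rw [hmaxlog hAM hBM] at h1
      have h2 : 0 ≤ 1 / M ^ 2 := by positivity
      calc 1 / M ^ 2 * Real.log (A M + B M)
          ≤ 1 / M ^ 2 * (Real.log 2 + max (Real.log (A M)) (Real.log (B M))) :=
            mul_le_mul_of_nonneg_left h1 h2
        _ = 1 / M ^ 2 * max (Real.log (A M)) (Real.log (B M)) + 1 / M ^ 2 * Real.log 2 := by ring
        _ = max (1 / M ^ 2 * Real.log (A M)) (1 / M ^ 2 * Real.log (B M)) + 1 / M ^ 2 * Real.log 2 := by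
            rcases le_total (Real.log (A M)) (Real.log (B M)) with h | h
            · rw [max_eq_right h, max_eq_right (mul_le_mul_of_nonneg_left h h2)]
            · rw [max_eq_left h, max_eq_left (mul_le_mul_of_nonneg_left h h2)]
  rwa [show max (-a) (-b) = -min a b by rw [min_def, max_def]; split_ifs <;> linarith] at key

/-- Exact Gaussian tail exponent of the tail integral of the Probit marginal
likelihood: `(1/M²)·log R_M → −min{(1 + n₀ r²)/2, (1 + n₁ r²)/2}` where `n₁` is the
number of one responses and `n₀` the number of zero responses. -/
theorem stmt_10 (n : ℕ) (hn : 1 ≤ n) (r : ℝ) (f : Fin n → ℝ)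
    (y : Fin n → ℕ) (hy : ∀ i, y i ≤ 1)
    (g : ℝ → ℝ)
    (hg : ∀ ξ, g ξ = ∏ i, Phi (f i + r * ξ) ^ (y i) * Phi (-(f i) - r * ξ) ^ (1 - y i))
    (n₁ n₀ : ℕ) (hn₁ : n₁ = ∑ i, y i) (hn₀ : n₀ = n - n₁)
    (R : ℝ → ℝ) (hR : ∀ M, R M = ∫ ξ in {ξ : ℝ | M < |ξ|}, g ξ * phi ξ) :
    Tendsto (fun M => (1 / M ^ 2) * Real.log (R M)) atTop
      (nhds (-(min ((1 + n₀ * r ^ 2) / 2) ((1 + n₁ * r ^ 2) / 2)))) := by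
  -- counting facts
  have hcast₀ : ((n₀:ℕ):ℝ) = ∑ i, ((1 - y i : ℕ) : ℝ) := by
    have hsum : ∑ i, (1 - y i) + ∑ i, y i = n := by
      rw [← Finset.sum_add_distrib]
      calc ∑ i, (1 - y i + y i) = ∑ _i : Fin n, 1 :=
            Finset.sum_congr rfl fun i _ => Nat.sub_add_cancel (hy i)
        _ = n := by simp
    have hℕ : n₀ = ∑ i, (1 - y i) := by omega
    rw [hℕ, Nat.cast_sum]
  have hcast₁ : ((n₁:ℕ):ℝ) = ∑ i, ((y i : ℕ) : ℝ) := by rw [hn₁, Nat.cast_sum]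
  have hcastm : ((n₁:ℕ):ℝ) = ∑ i, ((1 - (1 - y i) : ℕ) : ℝ) := by
    rw [hcast₁]
    exact Finset.sum_congr rfl fun i _ => by rw [Nat.sub_sub_self (hy i)]
  -- positivity and integrability of the integrand
  have hgmeas : Measurable g := by
    rw [funext hg]
    apply Finset.measurable_prod
    intro i _
    exact ((measurable_Phi.comp (measurable_const.add (measurable_id.const_mul r))).pow_const _).mul
      ((measurable_Phi.comp (measurable_const.sub (measurable_id.const_mul r))).pow_const _)
  have hg01 : ∀ ξ, 0 < g ξ ∧ g ξ ≤ 1 := by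
    intro ξ
    constructor
    · rw [hg ξ]
      exact Finset.prod_pos fun i _ =>
        mul_pos (pow_pos (Phi_pos _) _) (pow_pos (Phi_pos _) _)
    · rw [hg ξ]
      apply Finset.prod_le_one
      · exact fun i _ => mul_nonneg (pow_nonneg (Phi_nonneg _) _) (pow_nonneg (Phi_nonneg _) _)
      · intro i _
        calc Phi (f i + r * ξ) ^ y i * Phi (-f i - r * ξ) ^ (1 - y i)
            ≤ 1 ^ y i * 1 ^ (1 - y i) :=
              mul_le_mul (pow_le_pow_left₀ (Phi_nonneg _) (Phi_le_one _) _)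
                (pow_le_pow_left₀ (Phi_nonneg _) (Phi_le_one _) _)
                (pow_nonneg (Phi_nonneg _) _) (by norm_num)
          _ = 1 := by norm_num
  have hint : Integrable (fun ξ => g ξ * phi ξ) := by
    apply Integrable.mono' integrable_phi
    · exact (hgmeas.mul
        (measurable_const.mul ((measurable_id.pow_const 2).neg.div_const 2).exp)).aestronglyMeasurable
    · filter_upwards with ξ
      have h1 := (hg01 ξ).1
      have h2 := (hg01 ξ).2
      have h3 := phi_pos ξ
      rw [Real.norm_eq_abs, abs_of_nonneg (by positivity)]
      nlinarith
  -- decomposition of R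
  have hRM : ∀ M : ℝ, 0 < M →
      R M = (∫ ξ in Ioi M, g (-ξ) * phi ξ) + ∫ ξ in Ioi M, g ξ * phi ξ := by
    intro M hM
    rw [hR M]
    have hset : {ξ : ℝ | M < |ξ|} = Iio (-M) ∪ Ioi M := by
      ext ξ
      simp only [mem_setOf_eq, mem_union, mem_Iio, mem_Ioi, lt_abs]
      constructor
      · rintro (h | h)
        · right; exact h
        · left; linarith
      · rintro (h | h)
        · right; linarith
        · left; exact h
    have hdisj : Disjoint (Iio (-M)) (Ioi M) := by
      rw [disjoint_left]
      intro ξ h1 h2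
      simp only [mem_Iio] at h1
      simp only [mem_Ioi] at h2
      linarith
    rw [hset, setIntegral_union hdisj measurableSet_Ioi hint.integrableOn hint.integrableOn]
    congr 1
    rw [setIntegral_congr_set Iio_ae_eq_Iic]
    have hcv := integral_comp_neg_Ioi M (fun x => g x * phi x)
    rw [← hcv]
    exact setIntegral_congr_fun measurableSet_Ioi fun ξ _ => by rw [phi_even]
  rcases le_or_gt 0 r with hr | hr
  · -- r ≥ 0
    obtain ⟨hPpos, hPt⟩ := side_tendsto n r hr f y hy g hg n₀ hcast₀
    have hGm : ∀ ξ, g (-ξ) = ∏ i, Phi ((fun i => -f i) i + r * ξ) ^ ((fun i => 1 - y i) i) *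
        Phi (-((fun i => -f i) i) - r * ξ) ^ (1 - (fun i => 1 - y i) i) := by
      intro ξ
      rw [hg (-ξ)]
      refine Finset.prod_congr rfl fun i _ => ?_
      simp only
      rw [Nat.sub_sub_self (hy i)]
      rw [show f i + r * -ξ = -(-f i) - r * ξ from by ring,
        show -f i - r * -ξ = -f i + r * ξ from by ring, mul_comm]
    obtain ⟨hMpos, hMt⟩ := side_tendsto n r hr (fun i => -f i) (fun i => 1 - y i)
      (fun i => Nat.sub_le 1 _) (fun ξ => g (-ξ)) hGm n₁ hcastm
    have hcomb := combine (fun M => ∫ ξ in Ioi M, g (-ξ) * phi ξ)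
      (fun M => ∫ ξ in Ioi M, g ξ * phi ξ) _ _ hMpos hPpos hMt hPt
    rw [min_comm] at hcomb
    apply hcomb.congr'
    filter_upwards [eventually_gt_atTop (0:ℝ)] with M hM
    rw [hRM M hM]
  · -- r < 0
    have hr' : 0 ≤ -r := by linarith
    have hg' : ∀ ξ, g ξ = ∏ i, Phi ((fun i => -f i) i + (-r) * ξ) ^ ((fun i => 1 - y i) i) *
        Phi (-((fun i => -f i) i) - (-r) * ξ) ^ (1 - (fun i => 1 - y i) i) := by
      intro ξ
      rw [hg ξ]
      refine Finset.prod_congr rfl fun i _ => ?_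
      simp only
      rw [Nat.sub_sub_self (hy i)]
      rw [show f i + r * ξ = -(-f i) - (-r) * ξ from by ring,
        show -f i - r * ξ = -f i + (-r) * ξ from by ring, mul_comm]
    obtain ⟨hPpos, hPt⟩ := side_tendsto n (-r) hr' (fun i => -f i) (fun i => 1 - y i)
      (fun i => Nat.sub_le 1 _) g hg' n₁ hcastm
    have hGm : ∀ ξ, g (-ξ) = ∏ i, Phi (f i + (-r) * ξ) ^ (y i) *
        Phi (-(f i) - (-r) * ξ) ^ (1 - y i) := by
      intro ξ
      rw [hg (-ξ)]
      refine Finset.prod_congr rfl fun i _ => ?_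
      rw [show f i + r * -ξ = f i + (-r) * ξ from by ring,
        show -f i - r * -ξ = -f i - (-r) * ξ from by ring]
    obtain ⟨hMpos, hMt⟩ := side_tendsto n (-r) hr' f y hy (fun ξ => g (-ξ)) hGm n₀ hcast₀
    have hcomb := combine (fun M => ∫ ξ in Ioi M, g (-ξ) * phi ξ)
      (fun M => ∫ ξ in Ioi M, g ξ * phi ξ) _ _ hMpos hPpos hMt hPt
    rw [neg_sq] at hcomb
    apply hcomb.congr'
    filter_upwards [eventually_gt_atTop (0:ℝ)] with M hM
    rw [hRM M hM]
end
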